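/- arXiv:2003.09267 — 2 statements merged into one kernel-verified Lean document; each statement's English description precedes it below -/
import Mathlib

section
/- Let B ⊆ ℝ^n, let f : B → B define the discrete-time system b^{t+1} = f(b^t), let h : B → ℝ be continuous, and set S = {b ∈ B : h(b) ≥ 0}. Suppose there exists a class-K function α : [0,∞) → [0,∞) with α(r) < r for all r > 0 such that h(f(b)) − h(b) ≥ −α(h(b)) for all b ∈ S. Then S is forward invariant: for every trajectory (b^t)_{t∈ℕ} of the system with b^0 ∈ S, one has b^t ∈ S for all t ∈ ℕ. (Sufficiency direction of Theorem 1.) -/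
/-- **Theorem 1, sufficiency.** If `h` is a discrete-time barrier function for
`S = {b ∈ B | h b ≥ 0}` (i.e. `h` is continuous on `B` and there is a class-K
function `α` with `α r < r` for `r > 0` such that
`h (f b) - h b ≥ -α (h b)` for all `b ∈ S`), then `S` is forward invariant:
every trajectory of `b^{t+1} = f (b^t)` starting in `S` stays in `S`. -/
theorem dtbf_invariance_sufficiency
    (n : ℕ) (B : Set (Fin n → ℝ)) (f : (Fin n → ℝ) → (Fin n → ℝ))
    (hf : Set.MapsTo f B B)
    (h : (Fin n → ℝ) → ℝ) (hh : ContinuousOn h B)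
    (S : Set (Fin n → ℝ)) (hS : S = {b ∈ B | h b ≥ 0})
    (α : ℝ → ℝ)
    (hα_cont : ContinuousOn α (Set.Ici 0))
    (hα_mono : StrictMonoOn α (Set.Ici 0))
    (hα_zero : α 0 = 0)
    (hα_lt : ∀ r > 0, α r < r)
    (hbarrier : ∀ b ∈ S, h (f b) - h b ≥ -α (h b))
    (b : ℕ → (Fin n → ℝ))
    (htraj : ∀ t : ℕ, b (t + 1) = f (b t))
    (hb0 : b 0 ∈ S) :
    ∀ t : ℕ, b t ∈ S := by
  intro t
  induction t with
  | zero => exact hb0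
  | succ t ih =>
    rw [hS] at ih ⊢
    obtain ⟨hB, hpos⟩ := ih
    rw [htraj t]
    refine ⟨hf hB, ?_⟩
    have hbar := hbarrier (b t) (by rw [hS]; exact ⟨hB, hpos⟩)
    have hαle : α (h (b t)) ≤ h (b t) := by
      rcases lt_or_eq_of_le hpos with hgt | heq
      · exact le_of_lt (hα_lt _ hgt)
      · rw [← heq, hα_zero]
    linarith
end

section
/- Let B ⊆ ℝ^n, let f : B → B define the discrete-time system b^{t+1} = f(b^t), and let h_1, …, h_k : B → ℝ be continuous with S_i = {b ∈ B : h_i(b) ≥ 0}. Suppose there exists a class-K function α with α(r) < r for all r > 0 such that min_{i=1,…,k} h_i(f(b)) − min_{i=1,…,k} h_i(b) ≥ −α(min_{i=1,…,k} h_i(b)) for all b ∈ S_1 ∩ … ∩ S_k. Then the intersection S_1 ∩ … ∩ S_k is forward invariant: every trajectory starting in S_1 ∩ … ∩ S_k remains in S_1 ∩ … ∩ S_k for all times. (Boolean conjunction of DTBFs for invariance, used for enforcing conjunctive LDTL safety formulae.) -/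
/-- **Boolean conjunction of DTBFs for invariance.** Let `h_1, …, h_k` be
continuous on `B` with `S_i = {b ∈ B | h_i b ≥ 0}`. If there is a class-K
function `α` with `α r < r` for `r > 0` such that the DTBF condition holds for
`min_i h_i` on the intersection `S_1 ∩ … ∩ S_k`, i.e.
`min_i h_i (f b) - min_i h_i b ≥ -α (min_i h_i b)` whenever `b ∈ B` and
`h_i b ≥ 0` for all `i`, then the intersection is forward invariant: every
trajectory starting in `S_1 ∩ … ∩ S_k` remains there for all times. -/
theorem dtbf_conjunction_invariance
    (n k : ℕ) (hk : 0 < k)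
    (B : Set (Fin n → ℝ)) (f : (Fin n → ℝ) → (Fin n → ℝ))
    (hf : Set.MapsTo f B B)
    (h : Fin k → (Fin n → ℝ) → ℝ) (hh : ∀ i, ContinuousOn (h i) B)
    (α : ℝ → ℝ)
    (hα_cont : ContinuousOn α (Set.Ici 0))
    (hα_mono : StrictMonoOn α (Set.Ici 0))
    (hα_zero : α 0 = 0)
    (hα_lt : ∀ r > 0, α r < r)
    (hbarrier : ∀ b ∈ B, (∀ i : Fin k, h i b ≥ 0) →
      (Finset.univ.inf' (Finset.univ_nonempty_iff.mpr ⟨⟨0, hk⟩⟩)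
          (fun i => h i (f b))) -
        (Finset.univ.inf' (Finset.univ_nonempty_iff.mpr ⟨⟨0, hk⟩⟩)
          (fun i => h i b)) ≥
      -α (Finset.univ.inf' (Finset.univ_nonempty_iff.mpr ⟨⟨0, hk⟩⟩)
          (fun i => h i b)))
    (b : ℕ → (Fin n → ℝ))
    (hb0B : b 0 ∈ B)
    (htraj : ∀ t : ℕ, b (t + 1) = f (b t))
    (hb0 : ∀ i : Fin k, h i (b 0) ≥ 0) :
    ∀ t : ℕ, b t ∈ B ∧ ∀ i : Fin k, h i (b t) ≥ 0 := by
  intro t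
  induction t with
  | zero => exact ⟨hb0B, hb0⟩
  | succ t ih =>
    obtain ⟨hB, hpos⟩ := ih
    have hnext : b (t + 1) ∈ B := by rw [htraj t]; exact hf hB
    refine ⟨hnext, ?_⟩
    set ne := Finset.univ_nonempty_iff.mpr (⟨⟨0, hk⟩⟩ : Nonempty (Fin k))
    have hm : 0 ≤ Finset.univ.inf' ne (fun i => h i (b t)) :=
      Finset.le_inf' ne _ (fun i _ => hpos i)
    have hbar := hbarrier (b t) hB hpos
    have hα : α (Finset.univ.inf' ne (fun i => h i (b t))) ≤
        Finset.univ.inf' ne (fun i => h i (b t)) := by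
      rcases eq_or_lt_of_le hm with heq | hlt
      · rw [← heq, hα_zero]
      · exact le_of_lt (hα_lt _ hlt)
    have hmin : 0 ≤ Finset.univ.inf' ne (fun i => h i (f (b t))) := by linarith
    intro i
    rw [htraj t]
    exact le_trans hmin (Finset.inf'_le _ (Finset.mem_univ i))
end
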